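/- For the Chow-Robbins game, for every t > 0 there is a dense subset of {x : (t,x) ∈ C} on which the function x ↦ V(t,x) is not differentiable. -/

import Mathlib

open MeasureTheory ProbabilityTheory Set Filter

open Topology

/-!
Each first entrance time `τ_x` into the stopping set is optimal from `x` and remains admissible
from every other starting point `y`, where its expected gain is affine in `y`. Hence `V t` has the
supporting lines `y ↦ V t x + L x * (y - x)` with slopes `L x = E[1 / (t + τ_x)]`. Suppose that,
with positive probability, the walk from `x₀` follows a path that stays strictly below the boundary
and meets it exactly at time `n`. From any `x < x₀` the same path misses the boundary at time `n`,
so `L x ≤ L x₀ - c` for a fixed `c > 0`, and `V t` cannot be differentiable at `x₀`. Since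
`0 ≤ b s ≤ s`, the boundary cannot decrease, so it increases to infinity with increments tending
to zero, and such corners `x₀` (reached by walking down and then up) occur in every interval
below `b t`.
-/

theorem not_differentiableAt_of_supporting_slopes {f : ℝ → ℝ} {x₀ d e : ℝ} (hde : d < e)
    (hleft : ∀ y ≤ x₀, f x₀ + d * (y - x₀) ≤ f y) (hright : ∀ y ≥ x₀, f x₀ + e * (y - x₀) ≤ f y) :
    ¬ DifferentiableAt ℝ f x₀ := by
  intro hf
  have hslope := hasDerivAt_iff_tendsto_slope.mp hf.hasDerivAt
  have he : e ≤ deriv f x₀ := by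
    have hgt : Tendsto (slope f x₀) (𝓝[>] x₀) (𝓝 (deriv f x₀)) :=
      hslope.mono_left (nhdsWithin_mono _ fun y hy => ne_of_gt hy)
    refine ge_of_tendsto hgt ?_
    filter_upwards [self_mem_nhdsWithin] with y (hy : x₀ < y)
    rw [slope_def_field, le_div_iff₀ (sub_pos.2 hy)]
    linarith [hright y hy.le]
  have hd : deriv f x₀ ≤ d := by
    have hlt : Tendsto (slope f x₀) (𝓝[<] x₀) (𝓝 (deriv f x₀)) :=
      hslope.mono_left (nhdsWithin_mono _ fun y hy => ne_of_lt hy)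
    refine le_of_tendsto hlt ?_
    filter_upwards [self_mem_nhdsWithin] with y (hy : y < x₀)
    rw [slope_def_field, div_le_iff_of_neg (sub_neg.2 hy)]
    linarith [hleft y hy.le]
  linarith

theorem supporting_line_of_left_supporting_lines {f : ℝ → ℝ} {x₀ d : ℝ} (hf : ContinuousAt f x₀)
    (hsupp : ∀ x < x₀, ∃ s ≤ d, ∀ y, f x + s * (y - x) ≤ f y) :
    ∀ y ≤ x₀, f x₀ + d * (y - x₀) ≤ f y := by
  intro y hy
  rcases hy.lt_or_eq with hy | rfl
  · have hlim : Tendsto (fun x => f x + d * (y - x)) (𝓝[<] x₀) (𝓝 (f x₀ + d * (y - x₀))) :=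
      (hf.tendsto.add ((tendsto_const_nhds.sub tendsto_id).const_mul d)).mono_left
        nhdsWithin_le_nhds
    refine le_of_tendsto hlim ?_
    filter_upwards [Ioo_mem_nhdsLT hy] with x ⟨hyx, hx⟩
    obtain ⟨s, hsd, hs⟩ := hsupp x hx
    nlinarith [hs y]
  · simp

theorem sub_le_mul_of_forall_add_one_sub_le {f : ℝ → ℝ} {K θ : ℝ}
    (hf : ∀ s ≥ K, f (s + 1) - f s ≤ θ) {u : ℝ} (hu : K ≤ u) (d : ℕ) :
    f (u + d) - f u ≤ θ * d := by
  induction d with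
  | zero => simp
  | succ d ih =>
    have hstep := hf (u + d) (by linarith [(Nat.cast_nonneg d : (0 : ℝ) ≤ d)])
    push_cast
    rw [← add_assoc]
    linarith

theorem exists_mem_Ioc_of_add_one_le_add {u : ℕ → ℝ} {a δ : ℝ} (h0 : u 0 ≤ a)
    (hstep : ∀ i, u (i + 1) ≤ u i + δ) (hexceeds : ∃ i, a < u i) : ∃ i, u i ∈ Ioc a (a + δ) := by
  classical
  obtain ⟨i, hi⟩ : ∃ i, Nat.find hexceeds = i + 1 :=
    Nat.exists_eq_add_one.2 (Nat.pos_of_ne_zero fun h => (Nat.find_spec hexceeds).not_ge (h ▸ h0))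
  have hprev : u i ≤ a := not_lt.1 (Nat.find_min hexceeds (by omega))
  exact ⟨i + 1, hi ▸ Nat.find_spec hexceeds, by linarith [hstep i]⟩

def downUpStep (m i : ℕ) : ℝ := if i < m then -1 else 1

theorem downUpStep_eq_neg_one_or_eq_one (m i : ℕ) : downUpStep m i = -1 ∨ downUpStep m i = 1 := by
  unfold downUpStep
  split_ifs <;> simp

theorem sum_range_downUpStep (m k : ℕ) :
    ∑ i ∈ Finset.range k, downUpStep m i = if k ≤ m then -(k : ℝ) else k - 2 * m := by
  induction k with
  | zero => simp
  | succ k ih =>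
    rw [Finset.sum_range_succ, ih, downUpStep]
    rcases lt_trichotomy k m with h | rfl | h
    · rw [if_pos h.le, if_pos h, if_pos (by omega : k + 1 ≤ m)]; push_cast; ring
    · rw [if_pos le_rfl, if_neg (lt_irrefl k), if_neg (by omega)]; push_cast; ring
    · rw [if_neg (by omega), if_neg (by omega), if_neg (by omega)]; push_cast; ring

theorem downUp_path_touching_of_slope_lt_one {b : ℝ → ℝ} (hmono : Monotone b) {t θ : ℝ}
    (hθ : θ < 1) {m j : ℕ} (hgrowth : ∀ s ≥ t + m, ∀ d : ℕ, b (s + d) - b s ≤ θ * d)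
    (hbelow : b (t + (2 * m + j : ℕ)) - j < b t) :
    (∀ k < 2 * m + j,
      b (t + (2 * m + j : ℕ)) - j + ∑ i ∈ Finset.range k, downUpStep m i < b (t + k)) ∧
    b (t + (2 * m + j : ℕ)) - j + ∑ i ∈ Finset.range (2 * m + j), downUpStep m i =
      b (t + (2 * m + j : ℕ)) := by
  refine ⟨fun k hk => ?_, ?_⟩
  · rw [sum_range_downUpStep]
    split_ifs with hkm
    · have := hmono (le_add_of_nonneg_right (Nat.cast_nonneg k) : t ≤ t + k)
      linarith [(Nat.cast_nonneg k : (0 : ℝ) ≤ k)]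
    · obtain ⟨d, hd⟩ := Nat.exists_eq_add_of_lt hk
      have hgrow := hgrowth (t + k) (by
        linarith [(Nat.cast_le (α := ℝ)).2 (show m ≤ k by omega)]) (d + 1)
      have hn : ((2 * m + j : ℕ) : ℝ) = k + (d + 1 : ℕ) := by rw [hd]; push_cast; ring
      rw [hn, ← add_assoc]
      push_cast at hgrow hn ⊢
      nlinarith
  · rw [sum_range_downUpStep]
    split_ifs with hnm
    · obtain ⟨rfl, rfl⟩ : m = 0 ∧ j = 0 := by omega
      simp
    · push_cast; ring

/-- Increasing `i` by one moves the point by at most `2θ`, so the discrete intermediate value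
theorem applies once `j` is so large that the point starts below `α`. -/
theorem exists_sub_mem_Ioc_of_slope_lt_one {b : ℝ → ℝ} (htop : Tendsto b atTop atTop) {t θ : ℝ}
    (hθ : θ < 1) (M : ℕ) (hgrowth : ∀ s ≥ t + M, ∀ d : ℕ, b (s + d) - b s ≤ θ * d) (α : ℝ) :
    ∃ i j : ℕ, b (t + (2 * (M + i) + j : ℕ)) - j ∈ Ioc α (α + 2 * θ) := by
  set j := ⌈(b (t + 2 * M) - α) / (1 - θ)⌉₊
  set u : ℕ → ℝ := fun i => b (t + (2 * (M + i) + j : ℕ)) - j with hu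
  have hu0 : u 0 ≤ α := by
    have hgrow := hgrowth (t + 2 * M) (by linarith [(Nat.cast_nonneg M : (0 : ℝ) ≤ M)]) j
    have hj : b (t + 2 * M) - α ≤ j * (1 - θ) := (div_le_iff₀ (by linarith)).1 (Nat.le_ceil _)
    simp only [hu, add_zero]
    push_cast
    rw [← add_assoc]
    nlinarith
  have hstep : ∀ i, u (i + 1) ≤ u i + 2 * θ := fun i => by
    have hgrow := hgrowth (t + (2 * (M + i) + j : ℕ)) (by push_cast; linarith [
      (Nat.cast_nonneg M : (0 : ℝ) ≤ M), (Nat.cast_nonneg i : (0 : ℝ) ≤ i),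
      (Nat.cast_nonneg j : (0 : ℝ) ≤ j)]) 2
    simp only [hu]
    push_cast at hgrow ⊢
    rw [show t + (2 * (M + (i + 1)) + j : ℝ) = t + (2 * (M + i) + j) + 2 by ring]
    linarith
  have hexceeds : ∃ i, α < u i := by
    obtain ⟨S, hS⟩ := eventually_atTop.1 (htop.eventually_gt_atTop (α + j))
    refine ⟨⌈S - t⌉₊, ?_⟩
    have := hS (t + (2 * (M + ⌈S - t⌉₊) + j : ℕ)) (by
      push_cast
      linarith [Nat.le_ceil (S - t), (Nat.cast_nonneg M : (0 : ℝ) ≤ M),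
        (Nat.cast_nonneg ⌈S - t⌉₊ : (0 : ℝ) ≤ ⌈S - t⌉₊), (Nat.cast_nonneg j : (0 : ℝ) ≤ j)])
    simp only [hu]
    linarith
  obtain ⟨i, hi⟩ := exists_mem_Ioc_of_add_one_le_add hu0 hstep hexceeds
  exact ⟨i, j, hi⟩

/-- The starting point is `x₀ = b (t + n) - j` with `n = 2m + j`, so that the walk going down for
`m` steps and then up ends at `b (t + n)` at time `n`; choosing `θ < (β - α) / 2` puts `x₀` in
`(α, β)`. -/
theorem exists_downUp_path_touching {b : ℝ → ℝ} (hmono : Monotone b) (htop : Tendsto b atTop atTop)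
    (hslow : Tendsto (fun s => b (s + 1) - b s) atTop (𝓝 0)) (t : ℝ) {α β : ℝ} (hαβ : α < β)
    (hβ : β ≤ b t) :
    ∃ m n : ℕ, ∃ x₀ ∈ Ioo α β,
      (∀ k < n, x₀ + ∑ i ∈ Finset.range k, downUpStep m i < b (t + k)) ∧
      x₀ + ∑ i ∈ Finset.range n, downUpStep m i = b (t + n) := by
  set θ := min (β - α) 1 / 4 with hθ
  have hθpos : 0 < θ := by have := lt_min (sub_pos.2 hαβ) one_pos; positivity
  have hθ1 : θ < 1 := by linarith [min_le_right (β - α) 1]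
  have hθβ : α + 2 * θ < β := by linarith [min_le_left (β - α) 1]
  obtain ⟨K, hK⟩ := eventually_atTop.1 (hslow.eventually (eventually_le_nhds hθpos))
  have hgrowth : ∀ s ≥ t + ⌈K - t⌉₊, ∀ d : ℕ, b (s + d) - b s ≤ θ * d := fun s hs =>
    sub_le_mul_of_forall_add_one_sub_le hK (by linarith [Nat.le_ceil (K - t)])
  obtain ⟨i, j, hij⟩ := exists_sub_mem_Ioc_of_slope_lt_one htop hθ1 _ hgrowth α
  refine ⟨⌈K - t⌉₊ + i, _, _, ⟨hij.1, by linarith [hij.2]⟩,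
    downUp_path_touching_of_slope_lt_one hmono hθ1 (fun s hs => hgrowth s ?_) (by linarith [hij.2])⟩
  push_cast at hs
  linarith [(Nat.cast_nonneg i : (0 : ℝ) ≤ i)]

theorem Iio_subset_closure_of_forall_exists_mem_Ioo {S : Set ℝ} {c : ℝ}
    (hS : ∀ α β, α < β → β ≤ c → ∃ x ∈ S, x ∈ Ioo α β) : Iio c ⊆ closure S := by
  intro u (hu : u < c)
  refine Metric.mem_closure_iff.2 fun ε hε => ?_
  obtain ⟨x, hxS, hx⟩ := hS u (min (u + ε) c) (lt_min (by linarith) hu) (min_le_right _ _)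
  refine ⟨x, hxS, ?_⟩
  rw [Real.dist_eq, abs_sub_lt_iff]
  constructor <;> linarith [hx.1, hx.2, min_le_left (u + ε) c]

theorem add_div_add_le_max {t x z k : ℝ} (ht : 0 < t) (hk : 0 ≤ k) (hz : z ≤ k) :
    (x + z) / (t + k) ≤ max (x / t) 1 := by
  rw [div_le_iff₀ (by positivity)]
  have hx : x ≤ max (x / t) 1 * t := (div_le_iff₀ ht).1 (le_max_left _ _)
  have hk' : k ≤ max (x / t) 1 * k := le_mul_of_one_le_left hk (le_max_right _ _)
  linarith

theorem Antitone.nonpos_of_le_self {f : ℝ → ℝ} (hf : Antitone f) (hle : ∀ s > 0, f s ≤ s)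
    {s : ℝ} (hs : 0 < s) : f s ≤ 0 := by
  by_contra! hpos
  have hε : 0 < min s (f s / 2) := lt_min hs (half_pos hpos)
  linarith [hf (min_le_left s (f s / 2)), hle _ hε, min_le_right s (f s / 2)]

theorem monotone_and_tendsto_atTop_of_mem_Icc {b : ℝ → ℝ} (hb : ∀ s > 0, b s ∈ Icc 0 s)
    (hmono : Monotone b ∨ Antitone b) (hunbdd : ¬ ∃ M : ℝ, ∀ t : ℝ, 0 < t → |b t| ≤ M) :
    Monotone b ∧ Tendsto b atTop atTop := by
  have hmono : Monotone b := hmono.resolve_right fun hanti => hunbdd ⟨0, fun s hs => by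
    rw [abs_nonpos_iff]
    exact le_antisymm (hanti.nonpos_of_le_self (fun s hs => (hb s hs).2) hs) (hb s hs).1⟩
  refine ⟨hmono, hmono.tendsto_atTop_atTop fun M => ?_⟩
  by_contra! hlt
  exact hunbdd ⟨M, fun s hs => (abs_of_nonneg (hb s hs).1).trans_le (hlt s).le⟩

namespace ChowRobbins

variable {Ω : Type*} [MeasurableSpace Ω]

def payoffs (P : Measure Ω) (X : ℕ → Ω → ℝ) (F : Filtration ℕ ‹MeasurableSpace Ω›)
    (t x : ℝ) : Set ℝ :=
  {v : ℝ | ∃ τ : Ω → ℕ, IsStoppingTime F (fun ω => ((τ ω : ℕ) : WithTop ℕ)) ∧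
    Integrable (fun ω => (x + X (τ ω) ω) / (t + τ ω)) P ∧
    v = ∫ ω, (x + X (τ ω) ω) / (t + τ ω) ∂P}

variable {P : Measure Ω}

theorem ae_eq_neg_one_or_eq_one [IsProbabilityMeasure P] {η : Ω → ℝ} (hη : Measurable η)
    (h₁ : P {ω | η ω = -1} = 1 / 2) (h₂ : P {ω | η ω = 1} = 1 / 2) :
    ∀ᵐ ω ∂P, η ω = -1 ∨ η ω = 1 := by
  have hdisj : Disjoint {ω | η ω = -1} {ω | η ω = 1} :=
    Set.disjoint_left.2 fun ω (h : η ω = -1) (h' : η ω = 1) => by linarith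
  have hunion : P ({ω | η ω = -1} ∪ {ω | η ω = 1}) = 1 := by
    rw [measure_union hdisj (hη (measurableSet_singleton 1)), h₁, h₂, ENNReal.add_halves]
  exact (mem_ae_iff_prob_eq_one ((hη (measurableSet_singleton _)).union
    (hη (measurableSet_singleton _)))).2 hunion

theorem integrable_and_integral_eq_zero_of_sign [IsFiniteMeasure P] {η : Ω → ℝ}
    (hη : Measurable η) (hsign : ∀ᵐ ω ∂P, η ω = -1 ∨ η ω = 1)
    (hsymm : P {ω | η ω = -1} = P {ω | η ω = 1}) :
    Integrable η P ∧ ∫ ω, η ω ∂P = 0 := by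
  have hpos : MeasurableSet {ω | η ω = 1} := hη (measurableSet_singleton 1)
  have hneg : MeasurableSet {ω | η ω = -1} := hη (measurableSet_singleton (-1))
  have heq : η =ᵐ[P] {ω | η ω = 1}.indicator (1 : Ω → ℝ) - {ω | η ω = -1}.indicator 1 := by
    filter_upwards [hsign] with ω h
    rcases h with h | h <;> norm_num [indicator, h]
  have hint : Integrable ({ω | η ω = 1}.indicator (1 : Ω → ℝ) - {ω | η ω = -1}.indicator 1) P :=
    ((integrable_const 1).indicator hpos).sub ((integrable_const 1).indicator hneg)
  refine ⟨hint.congr heq.symm, ?_⟩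
  rw [integral_congr_ae heq, integral_sub' ((integrable_const 1).indicator hpos)
    ((integrable_const 1).indicator hneg), integral_indicator_one hpos,
    integral_indicator_one hneg, measureReal_def, measureReal_def, hsymm, sub_self]

theorem ae_sum_range_le {ξ : ℕ → Ω → ℝ} (hsign : ∀ i, ∀ᵐ ω ∂P, ξ i ω = -1 ∨ ξ i ω = 1) :
    ∀ᵐ ω ∂P, ∀ n, ∑ i ∈ Finset.range n, ξ i ω ≤ n := by
  filter_upwards [ae_all_iff.2 hsign] with ω h n
  calc ∑ i ∈ Finset.range n, ξ i ω ≤ ∑ _i ∈ Finset.range n, (1 : ℝ) :=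
        Finset.sum_le_sum fun i _ => by rcases h i with h | h <;> norm_num [h]
    _ = n := by simp

theorem measureReal_biInter_preimage_eq_half_pow {ξ : ℕ → Ω → ℝ} (hindep : iIndepFun ξ P)
    {e : ℕ → ℝ} (he : ∀ i, P {ω | ξ i ω = e i} = 1 / 2) (n : ℕ) :
    P.real (⋂ i ∈ Finset.range n, ξ i ⁻¹' {e i}) = (1 / 2) ^ n := by
  have he' : ∀ i, P (ξ i ⁻¹' {e i}) = 1 / 2 := he
  rw [measureReal_def, hindep.measure_inter_preimage_eq_mul _ fun i _ => measurableSet_singleton _,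
    Finset.prod_congr rfl fun i _ => he' i, Finset.prod_const, Finset.card_range,
    ENNReal.toReal_pow]
  norm_num

theorem measurable_of_isStoppingTime {F : Filtration ℕ ‹MeasurableSpace Ω›} {τ : Ω → ℕ}
    (hτ : IsStoppingTime F fun ω => (τ ω : WithTop ℕ)) : Measurable τ :=
  (Measurable.of_discrete (f := WithTop.untopD 0)).comp hτ.measurable'

theorem integrable_inv_add_natCast [IsFiniteMeasure P] {t : ℝ} (ht : 0 < t) {τ : Ω → ℕ}
    (hτ : Measurable τ) : Integrable (fun ω => (t + τ ω)⁻¹) P := by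
  refine Integrable.of_bound ((Measurable.of_discrete (f := fun k : ℕ => (t + k)⁻¹)).comp
    hτ).aestronglyMeasurable t⁻¹ (ae_of_all _ fun ω => ?_)
  rw [Real.norm_of_nonneg (by positivity)]
  exact inv_anti₀ ht (le_add_of_nonneg_right (Nat.cast_nonneg _))

theorem integral_inv_add_natCast_add_le [IsFiniteMeasure P] {t : ℝ} (ht : 0 < t) {τ₀ τ₁ : Ω → ℕ}
    (h₀ : Measurable τ₀) (h₁ : Measurable τ₁) (hle : ∀ᵐ ω ∂P, τ₀ ω ≤ τ₁ ω) {A : Set Ω}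
    (hA : MeasurableSet A) {n : ℕ} (hAτ : ∀ᵐ ω ∂P, ω ∈ A → τ₀ ω = n ∧ n + 1 ≤ τ₁ ω) :
    ∫ ω, (t + τ₁ ω)⁻¹ ∂P + P.real A * ((t + n)⁻¹ - (t + n + 1)⁻¹) ≤ ∫ ω, (t + τ₀ ω)⁻¹ ∂P := by
  have hint := (integrable_const ((t + n)⁻¹ - (t + n + 1)⁻¹)).indicator hA (μ := P)
  rw [← smul_eq_mul, ← integral_indicator_const _ hA,
    ← integral_add (integrable_inv_add_natCast ht h₁) hint]
  refine integral_mono_ae ((integrable_inv_add_natCast ht h₁).add hint)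
    (integrable_inv_add_natCast ht h₀) ?_
  filter_upwards [hle, hAτ] with ω hle hAω
  have hanti : (t + τ₁ ω)⁻¹ ≤ (t + τ₀ ω)⁻¹ := inv_anti₀ (by positivity) (by gcongr)
  by_cases hω : ω ∈ A
  · obtain ⟨h0, h1⟩ := hAω hω
    have h1' : (t + τ₁ ω)⁻¹ ≤ (t + n + 1)⁻¹ :=
      inv_anti₀ (by positivity) (by rw [add_assoc]; gcongr; exact_mod_cast h1)
    simp only [indicator_of_mem hω, h0]
    linarith
  · simpa [indicator_of_notMem hω] using hanti

variable {X : ℕ → Ω → ℝ} {F : Filtration ℕ ‹MeasurableSpace Ω›} {t : ℝ}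

theorem payoff_le_max [IsProbabilityMeasure P] (hXle : ∀ᵐ ω ∂P, ∀ n, X n ω ≤ n) (ht : 0 < t)
    {x v : ℝ} (hv : v ∈ payoffs P X F t x) : v ≤ max (x / t) 1 := by
  obtain ⟨τ, -, hint, rfl⟩ := hv
  calc ∫ ω, (x + X (τ ω) ω) / (t + τ ω) ∂P ≤ ∫ _ω, max (x / t) 1 ∂P :=
        integral_mono_ae hint (integrable_const _)
          (hXle.mono fun ω h => add_div_add_le_max ht (Nat.cast_nonneg _) (h _))
    _ = max (x / t) 1 := by simp

theorem bddAbove_payoffs [IsProbabilityMeasure P] (hXle : ∀ᵐ ω ∂P, ∀ n, X n ω ≤ n) (ht : 0 < t)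
    (x : ℝ) : BddAbove (payoffs P X F t x) :=
  ⟨_, fun _ hv => payoff_le_max hXle ht hv⟩

theorem integral_payoff_add_mem_payoffs [IsFiniteMeasure P] (ht : 0 < t) {τ : Ω → ℕ}
    (hτ : IsStoppingTime F fun ω => (τ ω : WithTop ℕ)) {x : ℝ}
    (hint : Integrable (fun ω => (x + X (τ ω) ω) / (t + τ ω)) P) (y : ℝ) :
    ∫ ω, (x + X (τ ω) ω) / (t + τ ω) ∂P + (∫ ω, (t + τ ω)⁻¹ ∂P) * (y - x) ∈
      payoffs P X F t y := by
  have hinv := (integrable_inv_add_natCast (P := P) ht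
    (measurable_of_isStoppingTime hτ)).mul_const (y - x)
  have hpayoff : (fun ω => (y + X (τ ω) ω) / (t + τ ω)) =
      fun ω => (x + X (τ ω) ω) / (t + τ ω) + (t + τ ω)⁻¹ * (y - x) := by
    funext ω
    field_simp
    ring
  refine ⟨τ, hτ, hpayoff ▸ hint.add hinv, ?_⟩
  rw [hpayoff, integral_add hint hinv, integral_mul_const]

section Value

variable [IsProbabilityMeasure P] {V : ℝ → ℝ}

theorem le_value (hXle : ∀ᵐ ω ∂P, ∀ n, X n ω ≤ n) (ht : 0 < t)
    (hV : ∀ x, V x = sSup (payoffs P X F t x)) {x v : ℝ} (hv : v ∈ payoffs P X F t x) :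
    v ≤ V x := by
  rw [hV]
  exact le_csSup (bddAbove_payoffs hXle ht x) hv

theorem value_le_max (hXle : ∀ᵐ ω ∂P, ∀ n, X n ω ≤ n) (ht : 0 < t)
    (hV : ∀ x, V x = sSup (payoffs P X F t x)) (x : ℝ) : V x ≤ max (x / t) 1 := by
  rw [hV]
  exact Real.sSup_le (fun v hv => payoff_le_max hXle ht hv) (le_max_of_le_right zero_le_one)

theorem div_add_natCast_le_value (hXle : ∀ᵐ ω ∂P, ∀ n, X n ω ≤ n) (ht : 0 < t)
    (hV : ∀ x, V x = sSup (payoffs P X F t x)) {n : ℕ} (hint : Integrable (X n) P)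
    (hmean : ∫ ω, X n ω ∂P = 0) (x : ℝ) : x / (t + n) ≤ V x := by
  refine le_value hXle ht hV ⟨fun _ => n, isStoppingTime_const F n,
    ((integrable_const x).add hint).div_const _, ?_⟩
  rw [integral_div, integral_add (integrable_const x) hint, hmean]
  simp

theorem div_le_value (hXle : ∀ᵐ ω ∂P, ∀ n, X n ω ≤ n) (hX0 : X 0 = 0) (ht : 0 < t)
    (hV : ∀ x, V x = sSup (payoffs P X F t x)) (x : ℝ) : x / t ≤ V x := by
  simpa using div_add_natCast_le_value hXle ht hV (n := 0) (hX0 ▸ integrable_zero _ _ _)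
    (by simp [hX0]) x

theorem value_add_mul_le (hXle : ∀ᵐ ω ∂P, ∀ n, X n ω ≤ n) (ht : 0 < t)
    (hV : ∀ x, V x = sSup (payoffs P X F t x)) {τ : Ω → ℕ}
    (hτ : IsStoppingTime F fun ω => (τ ω : WithTop ℕ)) {x : ℝ}
    (hint : Integrable (fun ω => (x + X (τ ω) ω) / (t + τ ω)) P)
    (hopt : V x = ∫ ω, (x + X (τ ω) ω) / (t + τ ω) ∂P) (y : ℝ) :
    V x + (∫ ω, (t + τ ω)⁻¹ ∂P) * (y - x) ≤ V y :=
  hopt ▸ le_value hXle ht hV (integral_payoff_add_mem_payoffs ht hτ hint y)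

theorem boundary_mem_Icc (hXle : ∀ᵐ ω ∂P, ∀ n, X n ω ≤ n) (hX0 : X 0 = 0)
    (hX1 : Integrable (X 1) P) (hX1mean : ∫ ω, X 1 ω ∂P = 0) (ht : 0 < t)
    (hV : ∀ x, V x = sSup (payoffs P X F t x)) {c : ℝ} (hD : ∀ x, V x = x / t ↔ c ≤ x) :
    c ∈ Icc 0 t := by
  constructor
  · by_contra! hc
    have hstop := div_add_natCast_le_value hXle ht hV hX1 hX1mean c
    rw [(hD c).2 le_rfl, Nat.cast_one] at hstop
    have hgain : c / t < c / (t + 1) := by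
      rw [div_lt_div_iff₀ ht (by linarith)]
      nlinarith
    linarith
  · refine (hD t).1 (le_antisymm ?_ ?_)
    · simpa [div_self ht.ne'] using value_le_max hXle ht hV t
    · exact div_le_value hXle hX0 ht hV t

end Value

section Kink

variable [IsProbabilityMeasure P] {ξ : ℕ → Ω → ℝ} {b : ℝ → ℝ} {τ : ℝ → Ω → ℕ}

theorem integral_inv_add_entrance_add_half_pow_le (hξmeas : ∀ i, Measurable (ξ i))
    (hξindep : iIndepFun ξ P) (hξ₁ : ∀ i, P {ω | ξ i ω = -1} = 1 / 2)
    (hξ₂ : ∀ i, P {ω | ξ i ω = 1} = 1 / 2) (hX : ∀ n ω, X n ω = ∑ i ∈ Finset.range n, ξ i ω)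
    (ht : 0 < t) (hτ : ∀ x ω, τ x ω = sInf {n : ℕ | b (t + n) ≤ x + X n ω})
    (hτmeas : ∀ x, Measurable (τ x)) (hτfin : ∀ x, ∀ᵐ ω ∂P, ∃ n : ℕ, b (t + n) ≤ x + X n ω)
    {e : ℕ → ℝ} (he : ∀ i, e i = -1 ∨ e i = 1) {n : ℕ} {x₀ : ℝ}
    (hbelow : ∀ k < n, x₀ + ∑ i ∈ Finset.range k, e i < b (t + k))
    (htouch : x₀ + ∑ i ∈ Finset.range n, e i = b (t + n)) {x : ℝ} (hx : x < x₀) :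
    ∫ ω, (t + τ x ω)⁻¹ ∂P + (1 / 2) ^ n * ((t + n)⁻¹ - (t + n + 1)⁻¹) ≤
      ∫ ω, (t + τ x₀ ω)⁻¹ ∂P := by
  set A := ⋂ i ∈ Finset.range n, ξ i ⁻¹' {e i}
  have hA : MeasurableSet A :=
    .biInter (Finset.range n).countable_toSet fun i _ => hξmeas i (measurableSet_singleton _)
  have hpath : ∀ ω ∈ A, ∀ k ≤ n, X k ω = ∑ i ∈ Finset.range k, e i := fun ω hω k hk => by
    rw [hX]
    refine Finset.sum_congr rfl fun i hi => ?_
    exact mem_iInter₂.1 hω i (Finset.mem_range.2 (by simp at hi; omega))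
  have hhalf : ∀ i, P {ω | ξ i ω = e i} = 1 / 2 := fun i => by
    rcases he i with h | h <;> simp only [h, hξ₁, hξ₂]
  rw [← measureReal_biInter_preimage_eq_half_pow hξindep hhalf n]
  refine integral_inv_add_natCast_add_le ht (hτmeas x₀) (hτmeas x) ?_ hA ?_
  · filter_upwards [hτfin x] with ω hne
    rw [hτ, hτ]
    exact csInf_le_csInf (OrderBot.bddBelow _) hne fun k (hk : b (t + k) ≤ x + X k ω) =>
      show b (t + k) ≤ x₀ + X k ω by linarith
  · filter_upwards [hτfin x] with ω hne hω
    rw [hτ, hτ]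
    constructor
    · refine IsLeast.csInf_eq ⟨show b (t + n) ≤ x₀ + X n ω by rw [hpath ω hω n le_rfl, htouch],
        fun k (hk : b (t + k) ≤ x₀ + X k ω) => ?_⟩
      by_contra! hkn
      linarith [hbelow k hkn, hpath ω hω k hkn.le]
    · refine le_csInf hne fun k (hk : b (t + k) ≤ x + X k ω) => ?_
      by_contra! hkn
      rcases (Nat.lt_succ_iff.1 hkn).lt_or_eq with hkn | rfl
      · linarith [hbelow k hkn, hpath ω hω k hkn.le]
      · linarith [hpath ω hω k le_rfl]

theorem not_differentiableAt_of_touching_path {V : ℝ → ℝ} (hξmeas : ∀ i, Measurable (ξ i))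
    (hξindep : iIndepFun ξ P) (hξ₁ : ∀ i, P {ω | ξ i ω = -1} = 1 / 2)
    (hξ₂ : ∀ i, P {ω | ξ i ω = 1} = 1 / 2) (hX : ∀ n ω, X n ω = ∑ i ∈ Finset.range n, ξ i ω)
    (hXle : ∀ᵐ ω ∂P, ∀ n, X n ω ≤ n) (ht : 0 < t) (hV : ∀ x, V x = sSup (payoffs P X F t x))
    (hτ : ∀ x ω, τ x ω = sInf {n : ℕ | b (t + n) ≤ x + X n ω})
    (hτstop : ∀ x, IsStoppingTime F fun ω => (τ x ω : WithTop ℕ))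
    (hτfin : ∀ x, ∀ᵐ ω ∂P, ∃ n : ℕ, b (t + n) ≤ x + X n ω)
    (hsolve : ∀ x, Integrable (fun ω => (x + X (τ x ω) ω) / (t + τ x ω)) P ∧
      V x = ∫ ω, (x + X (τ x ω) ω) / (t + τ x ω) ∂P)
    {e : ℕ → ℝ} (he : ∀ i, e i = -1 ∨ e i = 1) {n : ℕ} {x₀ : ℝ}
    (hbelow : ∀ k < n, x₀ + ∑ i ∈ Finset.range k, e i < b (t + k))
    (htouch : x₀ + ∑ i ∈ Finset.range n, e i = b (t + n)) :
    ¬ DifferentiableAt ℝ V x₀ := by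
  intro hdiff
  set L := fun x => ∫ ω, (t + τ x ω)⁻¹ ∂P
  have hsupp : ∀ x y, V x + L x * (y - x) ≤ V y := fun x =>
    value_add_mul_le hXle ht hV (hτstop x) (hsolve x).1 (hsolve x).2
  have hgap : 0 < (1 / 2 : ℝ) ^ n * ((t + n)⁻¹ - (t + n + 1)⁻¹) :=
    mul_pos (by positivity) (sub_pos.2 (inv_strictAnti₀ (by positivity) (lt_add_one _)))
  have hjump : ∀ x < x₀, L x ≤ L x₀ - (1 / 2) ^ n * ((t + n)⁻¹ - (t + n + 1)⁻¹) := fun x hx => by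
    linarith [integral_inv_add_entrance_add_half_pow_le hξmeas hξindep hξ₁ hξ₂ hX ht hτ
      (fun x => measurable_of_isStoppingTime (hτstop x)) hτfin he hbelow htouch hx]
  exact not_differentiableAt_of_supporting_slopes (sub_lt_self _ hgap)
    (supporting_line_of_left_supporting_lines hdiff.continuousAt fun x hx =>
      ⟨L x, hjump x hx, hsupp x⟩) (fun y _ => hsupp x₀ y) hdiff

end Kink

end ChowRobbins

open ChowRobbins

theorem chowRobbins_value_function_not_differentiable_on_dense_subset_general
    {Ω : Type*} [MeasurableSpace Ω] (P : Measure Ω) [IsProbabilityMeasure P]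
    -- i.i.d. symmetric Bernoulli increments
    (ξ : ℕ → Ω → ℝ) (hξmeas : ∀ i, Measurable (ξ i))
    (hξindep : iIndepFun ξ P)
    (hξ₁ : ∀ i, P {ω | ξ i ω = -1} = 1/2) (hξ₂ : ∀ i, P {ω | ξ i ω = 1} = 1/2)
    -- the simple symmetric random walk
    (X : ℕ → Ω → ℝ) (hX : ∀ n ω, X n ω = ∑ i ∈ Finset.range n, ξ i ω)
    -- its natural filtration
    (F : Filtration ℕ ‹MeasurableSpace Ω›)
    -- the value function of the Chow-Robbins game with gain `g t x = x / t`: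
    -- supremum over (a.s.) finite stopping times
    (V : ℝ → ℝ → ℝ)
    (hV : ∀ t : ℝ, 0 < t → ∀ x : ℝ, V t x =
      sSup {v : ℝ | ∃ τ : Ω → ℕ, IsStoppingTime F (fun ω => ((τ ω : ℕ) : WithTop ℕ)) ∧
        Integrable (fun ω => (x + X (τ ω) ω) / (t + τ ω)) P ∧
        v = ∫ ω, (x + X (τ ω) ω) / (t + τ ω) ∂P})
    -- the boundary `b`: the stopping set `{V t x = x / t}` is `{(t,x) | x ≥ b t}`
    (b : ℝ → ℝ)
    (hD : ∀ t : ℝ, 0 < t → ∀ x : ℝ, (V t x = x / t ↔ b t ≤ x))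
    -- the problem is solved by the a.s. finite first entrance time into the stopping set
    (τs : ℝ → ℝ → Ω → ℕ)
    (hτs : ∀ t x : ℝ, ∀ ω, τs t x ω = sInf {n : ℕ | b (t + n) ≤ x + X n ω})
    (hτstop : ∀ t x : ℝ, IsStoppingTime F (fun ω => ((τs t x ω : ℕ) : WithTop ℕ)))
    (hτfin : ∀ t : ℝ, 0 < t → ∀ x : ℝ, ∀ᵐ ω ∂P, ∃ n : ℕ, b (t + n) ≤ x + X n ω)
    (hsolve : ∀ t : ℝ, 0 < t → ∀ x : ℝ,
      Integrable (fun ω => (x + X (τs t x ω) ω) / (t + τs t x ω)) P ∧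
      V t x = ∫ ω, (x + X (τs t x ω) ω) / (t + τs t x ω) ∂P)
    -- `b` is monotonic, unbounded, and grows slowly
    (hmono : Monotone b ∨ Antitone b)
    (hunbdd : ¬ ∃ M : ℝ, ∀ t : ℝ, 0 < t → |b t| ≤ M)
    (hslow : Tendsto (fun t : ℝ => b (t + 1) - b t) atTop (nhds 0)) :
    ∀ t : ℝ, 0 < t → ∃ S : Set ℝ,
      S ⊆ {x : ℝ | x / t < V t x} ∧
      {x : ℝ | x / t < V t x} ⊆ closure S ∧
      ∀ x ∈ S, ¬ DifferentiableAt ℝ (fun y => V t y) x := by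
  have hsign i := ae_eq_neg_one_or_eq_one (hξmeas i) (hξ₁ i) (hξ₂ i)
  have hXle : ∀ᵐ ω ∂P, ∀ n, X n ω ≤ n := by simpa only [← hX] using ae_sum_range_le hsign
  have hX0 : X 0 = 0 := funext fun ω => by simp [hX]
  obtain ⟨hX1, hX1mean⟩ : Integrable (X 1) P ∧ ∫ ω, X 1 ω ∂P = 0 := by
    simpa only [funext (hX 1), Finset.sum_range_one] using integrable_and_integral_eq_zero_of_sign
      (hξmeas 0) (hsign 0) ((hξ₁ 0).trans (hξ₂ 0).symm)
  obtain ⟨hbmono, hbtop⟩ := monotone_and_tendsto_atTop_of_mem_Icc (fun s hs =>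
    boundary_mem_Icc hXle hX0 hX1 hX1mean hs (hV s hs) (hD s hs)) hmono hunbdd
  intro t ht
  refine ⟨{x | x < b t ∧ ¬ DifferentiableAt ℝ (V t) x}, fun x hx => ?_, fun u hu => ?_,
    fun x hx => hx.2⟩
  · exact (div_le_value hXle hX0 ht (hV t ht) x).lt_of_ne fun h =>
      hx.1.not_ge ((hD t ht x).1 h.symm)
  refine Iio_subset_closure_of_forall_exists_mem_Ioo (fun α β hαβ hβ => ?_)
    (not_le.1 fun h => hu.ne' ((hD t ht u).2 h))
  obtain ⟨m, n, x₀, hx₀, hbelow, htouch⟩ := exists_downUp_path_touching hbmono hbtop hslow t hαβ hβ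
  exact ⟨x₀, ⟨hx₀.2.trans_le hβ, not_differentiableAt_of_touching_path hξmeas hξindep hξ₁ hξ₂ hX
    hXle ht (hV t ht) (hτs t) (hτstop t) (hτfin t ht) (hsolve t ht)
    (downUpStep_eq_neg_one_or_eq_one m) hbelow htouch⟩, hx₀⟩

/-- For the Chow-Robbins game, for every `t > 0` there is a dense subset
of the `t`-section `{x | (t,x) ∈ C}` of the continuation set on which `x ↦ V t x` is not
differentiable. -/
theorem chowRobbins_value_function_not_differentiable_on_dense_subset
    {Ω : Type*} [MeasurableSpace Ω] (P : Measure Ω) [IsProbabilityMeasure P]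
    -- i.i.d. symmetric Bernoulli increments
    (ξ : ℕ → Ω → ℝ) (hξmeas : ∀ i, Measurable (ξ i))
    (hξindep : iIndepFun ξ P)
    (hξ₁ : ∀ i, P {ω | ξ i ω = -1} = 1/2) (hξ₂ : ∀ i, P {ω | ξ i ω = 1} = 1/2)
    -- the simple symmetric random walk
    (X : ℕ → Ω → ℝ) (hX : ∀ n ω, X n ω = ∑ i ∈ Finset.range n, ξ i ω)
    -- its natural filtration
    (F : Filtration ℕ ‹MeasurableSpace Ω›)
    (hF : F = Filtration.natural ξ fun i => (hξmeas i).stronglyMeasurable)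
    -- the value function of the Chow-Robbins game with gain `g t x = x / t`:
    -- supremum over (a.s.) finite stopping times
    (V : ℝ → ℝ → ℝ)
    (hV : ∀ t : ℝ, 0 < t → ∀ x : ℝ, V t x =
      sSup {v : ℝ | ∃ τ : Ω → ℕ, IsStoppingTime F (fun ω => ((τ ω : ℕ) : WithTop ℕ)) ∧
        Integrable (fun ω => (x + X (τ ω) ω) / (t + τ ω)) P ∧
        v = ∫ ω, (x + X (τ ω) ω) / (t + τ ω) ∂P})
    -- the boundary `b`: the stopping set `{V t x = x / t}` is `{(t,x) | x ≥ b t}`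
    (b : ℝ → ℝ)
    (hD : ∀ t : ℝ, 0 < t → ∀ x : ℝ, (V t x = x / t ↔ b t ≤ x))
    -- the problem is solved by the a.s. finite first entrance time into the stopping set
    (τs : ℝ → ℝ → Ω → ℕ)
    (hτs : ∀ t x : ℝ, ∀ ω, τs t x ω = sInf {n : ℕ | b (t + n) ≤ x + X n ω})
    (hτstop : ∀ t x : ℝ, IsStoppingTime F (fun ω => ((τs t x ω : ℕ) : WithTop ℕ)))
    (hτfin : ∀ t : ℝ, 0 < t → ∀ x : ℝ, ∀ᵐ ω ∂P, ∃ n : ℕ, b (t + n) ≤ x + X n ω)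
    (hsolve : ∀ t : ℝ, 0 < t → ∀ x : ℝ,
      Integrable (fun ω => (x + X (τs t x ω) ω) / (t + τs t x ω)) P ∧
      V t x = ∫ ω, (x + X (τs t x ω) ω) / (t + τs t x ω) ∂P)
    -- `b` is monotonic, unbounded, and grows slowly
    (hmono : Monotone b ∨ Antitone b)
    (hunbdd : ¬ ∃ M : ℝ, ∀ t : ℝ, 0 < t → |b t| ≤ M)
    (hslow : Tendsto (fun t : ℝ => b (t + 1) - b t) atTop (nhds 0)) :
    ∀ t : ℝ, 0 < t → ∃ S : Set ℝ,
      S ⊆ {x : ℝ | x / t < V t x} ∧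
      {x : ℝ | x / t < V t x} ⊆ closure S ∧
      ∀ x ∈ S, ¬ DifferentiableAt ℝ (fun y => V t y) x :=
  chowRobbins_value_function_not_differentiable_on_dense_subset_general P ξ hξmeas hξindep hξ₁ hξ₂ X
    hX F V hV b hD τs hτs hτstop hτfin hsolve hmono hunbdd hslow
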